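/- arXiv:2408.12283 — 5 statements merged into one kernel-verified Lean document; each statement's English description precedes it below -/
import Mathlib

section
/- Let H be a real Hilbert space and let F : H → H be strongly monotone with constant γ > 0 and Lipschitz continuous with constant L ≥ γ. Then for every f ∈ H there exists a unique a ∈ H with F(a) = f; in other words, F is a bijection of H onto itself (Zarantonello's lemma). -/
/-!
`F a = f` exactly when `a` is a fixed point of `x ↦ x - t • (F x - f)`. Expanding the square,
strong monotonicity and the Lipschitz bound make this map Lipschitz with constant
`√(1 - 2tγ + t²L²)`, which equals `√(1 - γ²/L²) < 1` for `t = γ / L²`; Banach's fixed point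
theorem gives a solution, and strong monotonicity makes it unique.
-/

open scoped RealInnerProductSpace

section StronglyMonotone

variable {H : Type*} [NormedAddCommGroup H] [InnerProductSpace ℝ H] {F : H → H} {γ L : ℝ}

theorem injective_of_strongly_monotone (hγ : 0 < γ)
    (hmono : ∀ a b : H, γ * ‖a - b‖ ^ 2 ≤ ⟪F a - F b, a - b⟫) : Function.Injective F := by
  intro a b hab
  have h := hmono a b
  rw [hab, sub_self, inner_zero_left] at h
  have : ‖a - b‖ ^ 2 = 0 := le_antisymm (nonpos_of_mul_nonpos_right h hγ) (sq_nonneg _)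
  exact sub_eq_zero.mp (norm_eq_zero.mp (pow_eq_zero_iff two_ne_zero |>.mp this))

theorem lipschitzWith_sub_smul_of_strongly_monotone
    (hmono : ∀ a b : H, γ * ‖a - b‖ ^ 2 ≤ ⟪F a - F b, a - b⟫)
    (hlip : ∀ a b : H, ‖F a - F b‖ ≤ L * ‖a - b‖) {t : ℝ} (ht : 0 ≤ t) :
    LipschitzWith ⟨√(1 - 2 * t * γ + t ^ 2 * L ^ 2), Real.sqrt_nonneg _⟩
      (fun x => x - t • F x) := by
  refine lipschitzWith_iff_norm_sub_le.mpr fun x y => ?_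
  have hsq : ‖(x - t • F x) - (y - t • F y)‖ ^ 2
      ≤ (1 - 2 * t * γ + t ^ 2 * L ^ 2) * ‖x - y‖ ^ 2 := by
    have hF : ‖F x - F y‖ ^ 2 ≤ (L * ‖x - y‖) ^ 2 :=
      pow_le_pow_left₀ (norm_nonneg _) (hlip x y) 2
    calc ‖(x - t • F x) - (y - t • F y)‖ ^ 2
        = ‖x - y‖ ^ 2 - 2 * t * ⟪F x - F y, x - y⟫ + t ^ 2 * ‖F x - F y‖ ^ 2 := by
          rw [show (x - t • F x) - (y - t • F y) = (x - y) - t • (F x - F y) by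
              rw [smul_sub]; abel,
            norm_sub_sq_real, real_inner_smul_right, real_inner_comm, norm_smul,
            Real.norm_eq_abs, mul_pow, sq_abs]
          ring
      _ ≤ ‖x - y‖ ^ 2 - 2 * t * (γ * ‖x - y‖ ^ 2) + t ^ 2 * (L * ‖x - y‖) ^ 2 := by
          gcongr
          exact hmono x y
      _ = (1 - 2 * t * γ + t ^ 2 * L ^ 2) * ‖x - y‖ ^ 2 := by ring
  calc ‖(x - t • F x) - (y - t • F y)‖
      = √(‖(x - t • F x) - (y - t • F y)‖ ^ 2) := (Real.sqrt_sq (norm_nonneg _)).symm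
    _ ≤ √((1 - 2 * t * γ + t ^ 2 * L ^ 2) * ‖x - y‖ ^ 2) := Real.sqrt_le_sqrt hsq
    _ = √(1 - 2 * t * γ + t ^ 2 * L ^ 2) * ‖x - y‖ := by
      rw [Real.sqrt_mul' _ (sq_nonneg _), Real.sqrt_sq (norm_nonneg _)]

end StronglyMonotone

theorem surjective_of_contractingWith_sub_smul {E : Type*} [NormedAddCommGroup E]
    [NormedSpace ℝ E] [CompleteSpace E] {F : E → E} {t : ℝ} (ht : t ≠ 0) {K : NNReal}
    (hK : ContractingWith K (fun x => x - t • F x)) : Function.Surjective F := by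
  intro f
  have hg : ContractingWith K (fun x => x - t • F x + t • f) :=
    ⟨hK.1, by simpa using hK.2.add (LipschitzWith.const (t • f))⟩
  refine ⟨ContractingWith.fixedPoint _ hg, ?_⟩
  set a := ContractingWith.fixedPoint _ hg
  have hfix : a - t • F a + t • f = a := hg.fixedPoint_isFixedPt
  have : t • (f - F a) = (a - t • F a + t • f) - a := by rw [smul_sub]; abel
  rw [hfix, sub_self] at this
  exact (sub_eq_zero.mp ((smul_eq_zero.mp this).resolve_left ht)).symm

/-- Zarantonello's lemma: a strongly monotone, Lipschitz continuous operator on a real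
Hilbert space is a bijection; each equation `F(a) = f` has a unique solution. -/
theorem stmt_2 {H : Type*} [NormedAddCommGroup H] [InnerProductSpace ℝ H] [CompleteSpace H]
    (F : H → H) (γ L : ℝ) (hγ : 0 < γ) (hγL : γ ≤ L)
    (hmono : ∀ a b : H, γ * ‖a - b‖ ^ 2 ≤ ⟪F a - F b, a - b⟫)
    (hlip : ∀ a b : H, ‖F a - F b‖ ≤ L * ‖a - b‖) :
    (∀ f : H, ∃! a : H, F a = f) ∧ Function.Bijective F := by
  have hL : 0 < L := hγ.trans_le hγL
  have hK : √(1 - 2 * (γ / L ^ 2) * γ + (γ / L ^ 2) ^ 2 * L ^ 2) < 1 := by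
    rw [show 1 - 2 * (γ / L ^ 2) * γ + (γ / L ^ 2) ^ 2 * L ^ 2 = 1 - (γ / L) ^ 2 by
      field_simp; ring, Real.sqrt_lt' one_pos]
    have : 0 < (γ / L) ^ 2 := by positivity
    linarith
  have hsurj : Function.Surjective F :=
    surjective_of_contractingWith_sub_smul (by positivity : γ / L ^ 2 ≠ 0)
      ⟨hK, lipschitzWith_sub_smul_of_strongly_monotone hmono hlip (by positivity)⟩
  have hbij : Function.Bijective F := ⟨injective_of_strongly_monotone hγ hmono, hsurj⟩
  exact ⟨hbij.existsUnique, hbij⟩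
end

section
/- Let E be a finite-dimensional real inner product space and W : E → ℝ twice continuously differentiable with constants 0 < γ ≤ L such that γ‖ξ‖² ≤ D²W(x)[ξ, ξ] ≤ L‖ξ‖² for all x, ξ ∈ E. Fix parameters 0 < ρ ≤ 1/2 and 0 < σ < 1/2, let a ∈ E and let δ ≠ 0 be the Newton direction at a. Then the set {k ∈ ℕ : W(a + ρᵏδ) ≤ W(a) + σρᵏ⟨∇W(a), δ⟩} is nonempty, and the backtracking step size τ = max{ρᵏ : k ∈ ℕ, W(a + ρᵏδ) ≤ W(a) + σρᵏ⟨∇W(a), δ⟩} is well defined and satisfies 0 < τ* ≤ τ ≤ 1 with lower bound τ* = 2ρ(1 − σ)γ/L. -/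
open scoped RealInnerProductSpace
open Set

/-!
Along the Newton direction the slope is `⟪∇W(a), δ⟫ = -D²W(a)[δ, δ] ≤ -γ‖δ‖²`, while the
second-order Taylor bound gives `W(a + tδ) ≤ W(a) + t⟪∇W(a), δ⟫ + L‖δ‖²t²/2`. Together they show
that the Armijo condition holds for every `t ∈ (0, 2(1-σ)γ/L]`. Backtracking therefore stops,
either at `τ = 1` or right after a rejected step `ρᵏ⁻¹ > 2(1-σ)γ/L`, so `τ ≥ 2ρ(1-σ)γ/L`.
-/

theorem le_add_mul_add_sq_of_deriv2_le {f f' f'' : ℝ → ℝ} {M a b : ℝ}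
    (hf : ∀ s, HasDerivAt f (f' s) s) (hf' : ∀ s, HasDerivAt f' (f'' s) s)
    (hM : ∀ s, f'' s ≤ M) (hab : a ≤ b) :
    f b ≤ f a + (b - a) * f' a + M * (b - a) ^ 2 / 2 := by
  have hB₁ : ∀ s, HasDerivAt (fun s => f' a + M * (s - a)) M s := fun s => by
    simpa using (((hasDerivAt_id s).sub_const a).const_mul M).const_add (f' a)
  have hB₂ : ∀ s, HasDerivAt (fun s => f a + (s - a) * f' a + M * (s - a) ^ 2 / 2)
      (f' a + M * (s - a)) s := fun s => by
    have := ((((hasDerivAt_id s).sub_const a).mul_const (f' a)).const_add (f a)).add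
      ((((hasDerivAt_id s).sub_const a).pow 2).const_mul M |>.div_const 2)
    exact this.congr_deriv (by simp only [id]; ring)
  have hf'_le : ∀ s ∈ Icc a b, f' s ≤ f' a + M * (s - a) :=
    image_le_of_deriv_right_le_deriv_boundary
      (fun s _ => (hf' s).continuousAt.continuousWithinAt)
      (fun s _ => (hf' s).hasDerivWithinAt) (by simp)
      (fun s _ => (hB₁ s).continuousAt.continuousWithinAt)
      (fun s _ => (hB₁ s).hasDerivWithinAt) (fun s _ => hM s)
  exact image_le_of_deriv_right_le_deriv_boundary
    (fun s _ => (hf s).continuousAt.continuousWithinAt)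
    (fun s _ => (hf s).hasDerivWithinAt) (by simp)
    (fun s _ => (hB₂ s).continuousAt.continuousWithinAt)
    (fun s _ => (hB₂ s).hasDerivWithinAt) (fun s hs => hf'_le s (Ico_subset_Icc_self hs))
    (right_mem_Icc.2 hab)

section Ray

variable {E : Type*} [NormedAddCommGroup E] [NormedSpace ℝ E] {W : E → ℝ} {a δ : E}

theorem ContDiff.le_add_fderiv_add_of_iteratedFDeriv_le (hW : ContDiff ℝ 2 W) {M : ℝ}
    (hM : ∀ x, iteratedFDeriv ℝ 2 W x ![δ, δ] ≤ M) {t : ℝ} (ht : 0 ≤ t) :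
    W (a + t • δ) ≤ W a + t * fderiv ℝ W a δ + M * t ^ 2 / 2 := by
  have hray : ∀ s : ℝ, HasDerivAt (fun s : ℝ => a + s • δ) δ s := fun s => by
    simpa using ((hasDerivAt_id s).smul_const δ).const_add a
  have hW' : Differentiable ℝ (fderiv ℝ W) :=
    (hW.fderiv_right (m := 1) le_rfl).differentiable one_ne_zero
  have h₁ : ∀ s : ℝ, HasDerivAt (fun s => W (a + s • δ)) (fderiv ℝ W (a + s • δ) δ) s :=
    fun s => ((hW.differentiable two_ne_zero _).hasFDerivAt).comp_hasDerivAt s (hray s)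
  have h₂ : ∀ s : ℝ, HasDerivAt (fun s => fderiv ℝ W (a + s • δ) δ)
      (fderiv ℝ (fderiv ℝ W) (a + s • δ) δ δ) s := fun s =>
    (ContinuousLinearMap.apply ℝ ℝ δ).hasFDerivAt.comp_hasDerivAt s
      ((hW' _).hasFDerivAt.comp_hasDerivAt s (hray s))
  have hM' : ∀ s : ℝ, fderiv ℝ (fderiv ℝ W) (a + s • δ) δ δ ≤ M := fun s => by
    simpa [iteratedFDeriv_two_apply] using hM (a + s • δ)
  simpa using le_add_mul_add_sq_of_deriv2_le h₁ h₂ hM' ht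

theorem armijo_of_mul_le (hW : ContDiff ℝ 2 W) {γ L σ t : ℝ}
    (hup : ∀ x, iteratedFDeriv ℝ 2 W x ![δ, δ] ≤ L * ‖δ‖ ^ 2)
    (hdescent : fderiv ℝ W a δ ≤ -(γ * ‖δ‖ ^ 2)) (hσ : σ ≤ 1) (ht : 0 ≤ t)
    (htL : t * L ≤ 2 * (1 - σ) * γ) :
    W (a + t • δ) ≤ W a + σ * t * fderiv ℝ W a δ := by
  have htaylor := hW.le_add_fderiv_add_of_iteratedFDeriv_le (a := a) hup ht
  have hlin : (1 - σ) * t * fderiv ℝ W a δ ≤ (1 - σ) * t * -(γ * ‖δ‖ ^ 2) :=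
    mul_le_mul_of_nonneg_left hdescent (mul_nonneg (by linarith) ht)
  have hquad : L * ‖δ‖ ^ 2 * t ^ 2 / 2 ≤ (1 - σ) * t * (γ * ‖δ‖ ^ 2) := by
    nlinarith [mul_le_mul_of_nonneg_right htL (by positivity : 0 ≤ t * ‖δ‖ ^ 2 / 2)]
  linarith

end Ray

theorem exists_isGreatest_backtracking {P : ℝ → Prop} {ρ c : ℝ} (hρ0 : 0 < ρ) (hρ1 : ρ < 1) (hc : 0 < c)
    (hP : ∀ t, 0 < t → t ≤ c → P t) :
    (∃ k : ℕ, P (ρ ^ k)) ∧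
      ∃ τ, IsGreatest {t | ∃ k : ℕ, t = ρ ^ k ∧ P t} τ ∧ min 1 (ρ * c) ≤ τ ∧ τ ≤ 1 := by
  classical
  have hex : ∃ k : ℕ, P (ρ ^ k) := by
    obtain ⟨k, hk⟩ := exists_pow_lt_of_lt_one hc hρ1
    exact ⟨k, hP _ (pow_pos hρ0 k) hk.le⟩
  refine ⟨hex, ρ ^ Nat.find hex, ⟨⟨_, rfl, Nat.find_spec hex⟩, ?_⟩, ?_,
    pow_le_one₀ hρ0.le hρ1.le⟩
  · rintro t ⟨k, rfl, hk⟩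
    exact pow_le_pow_of_le_one hρ0.le hρ1.le (Nat.find_min' hex hk)
  · rcases Nat.eq_zero_or_pos (Nat.find hex) with h0 | hpos
    · simp [h0]
    · -- the rejected previous step must exceed `c`
      have hc_lt : c < ρ ^ (Nat.find hex - 1) := by
        by_contra! hle
        exact Nat.find_min hex (by omega) (hP _ (pow_pos hρ0 _) hle)
      calc min 1 (ρ * c) ≤ ρ * c := min_le_right _ _
        _ ≤ ρ * ρ ^ (Nat.find hex - 1) := by gcongr
        _ = ρ ^ Nat.find hex := by rw [← pow_succ', Nat.sub_add_cancel hpos]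

theorem stmt_7_general {E : Type*} [NormedAddCommGroup E] [InnerProductSpace ℝ E]
    [FiniteDimensional ℝ E]
    (W : E → ℝ) (γ L : ℝ) (hγ : 0 < γ) (hγL : γ ≤ L)
    (hW : ContDiff ℝ 2 W)
    (hlow : ∀ x ξ : E, γ * ‖ξ‖ ^ 2 ≤ iteratedFDeriv ℝ 2 W x ![ξ, ξ])
    (hup : ∀ x ξ : E, iteratedFDeriv ℝ 2 W x ![ξ, ξ] ≤ L * ‖ξ‖ ^ 2)
    (ρ σ : ℝ) (hρ0 : 0 < ρ) (hρ1 : ρ ≤ 1 / 2) (hσ0 : 0 < σ) (hσ1 : σ < 1 / 2)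
    (a δ : E)
    (hδ : ∀ v : E, iteratedFDeriv ℝ 2 W a ![δ, v] = -⟪gradient W a, v⟫) :
    {k : ℕ | W (a + ρ ^ k • δ) ≤ W a + σ * ρ ^ k * ⟪gradient W a, δ⟫}.Nonempty ∧
    ∃ τ : ℝ,
      IsGreatest {t : ℝ | ∃ k : ℕ, t = ρ ^ k ∧
        W (a + t • δ) ≤ W a + σ * t * ⟪gradient W a, δ⟫} τ ∧
      2 * ρ * (1 - σ) * γ / L ≤ τ ∧ τ ≤ 1 := by
  have hL : 0 < L := hγ.trans_le hγL
  have hdescent : fderiv ℝ W a δ ≤ -(γ * ‖δ‖ ^ 2) := by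
    linarith [hlow a δ, hδ δ, inner_gradient_left (𝕜 := ℝ) (f := W) (x := a) (y := δ)]
  have hc : 0 < 2 * (1 - σ) * γ / L := by
    apply div_pos _ hL; nlinarith
  have hρc : ρ * (2 * (1 - σ) * γ / L) ≤ 1 := by
    rw [← mul_div_assoc, div_le_one hL]
    nlinarith [mul_le_mul_of_nonneg_right hρ1 (by nlinarith : 0 ≤ 2 * (1 - σ) * γ)]
  obtain ⟨hex, τ, hτ, hτlow, hτ1⟩ := exists_isGreatest_backtracking hρ0 (by linarith) hc fun t ht htc =>
    armijo_of_mul_le hW (hup · δ) hdescent (by linarith) ht.le ((le_div_iff₀ hL).1 htc)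
  simp only [inner_gradient_left]
  refine ⟨hex, τ, hτ, ?_, hτ1⟩
  rw [min_eq_right hρc] at hτlow
  exact le_of_eq_of_le (by ring) hτlow

/-- Well-definedness and lower bound for the Armijo backtracking step size along a nonzero
Newton direction: the backtracking step size `τ` exists and satisfies
`2ρ(1-σ)γ/L ≤ τ ≤ 1`. -/
theorem stmt_7 {E : Type*} [NormedAddCommGroup E] [InnerProductSpace ℝ E]
    [FiniteDimensional ℝ E]
    (W : E → ℝ) (γ L : ℝ) (hγ : 0 < γ) (hγL : γ ≤ L)
    (hW : ContDiff ℝ 2 W)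
    (hlow : ∀ x ξ : E, γ * ‖ξ‖ ^ 2 ≤ iteratedFDeriv ℝ 2 W x ![ξ, ξ])
    (hup : ∀ x ξ : E, iteratedFDeriv ℝ 2 W x ![ξ, ξ] ≤ L * ‖ξ‖ ^ 2)
    (ρ σ : ℝ) (hρ0 : 0 < ρ) (hρ1 : ρ ≤ 1 / 2) (hσ0 : 0 < σ) (hσ1 : σ < 1 / 2)
    (a δ : E)
    (hδ : ∀ v : E, iteratedFDeriv ℝ 2 W a ![δ, v] = -⟪gradient W a, v⟫)
    (hδ0 : δ ≠ 0) :
    {k : ℕ | W (a + ρ ^ k • δ) ≤ W a + σ * ρ ^ k * ⟪gradient W a, δ⟫}.Nonempty ∧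
    ∃ τ : ℝ,
      IsGreatest {t : ℝ | ∃ k : ℕ, t = ρ ^ k ∧
        W (a + t • δ) ≤ W a + σ * t * ⟪gradient W a, δ⟫} τ ∧
      2 * ρ * (1 - σ) * γ / L ≤ τ ∧ τ ≤ 1 :=
  stmt_7_general W γ L hγ hγL hW hlow hup ρ σ hρ0 hρ1 hσ0 hσ1 a δ hδ
end

section
/- Let E be a finite-dimensional real inner product space and W : E → ℝ twice continuously differentiable with constants 0 < γ ≤ L such that γ‖ξ‖² ≤ D²W(x)[ξ, ξ] ≤ L‖ξ‖² for all x, ξ ∈ E. Let a* ∈ E be the unique point with ∇W(a*) = 0. For a ∈ E let δ be the Newton direction at a, and set ‖v‖_A := √(D²W(a)[v, v]). Then ‖δ‖_A ≥ (γ/√L)‖a − a*‖. -/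
/-! Along the segment from `a*` to `a`, the lower Hessian bound gives strong monotonicity:
`γ‖a - a*‖² ≤ ⟪∇W(a), a - a*⟫ = -D²W(a)[δ, a - a*]`. Cauchy–Schwarz for the form `D²W(a)` bounds
the right side by `‖δ‖_A ‖a - a*‖_A`, and the upper Hessian bound gives `‖a - a*‖_A ≤ √L ‖a - a*‖`. -/

open scoped RealInnerProductSpace

section

variable {E : Type*} [NormedAddCommGroup E] [NormedSpace ℝ E] {W : E → ℝ}

theorem iteratedFDeriv_two_apply_pair (x v w : E) :
    iteratedFDeriv ℝ 2 W x ![v, w] = fderiv ℝ (fderiv ℝ W) x v w := by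
  rw [iteratedFDeriv_two_apply]
  rfl

theorem mul_norm_sq_le_fderiv_sub_fderiv {γ : ℝ} (hW : Differentiable ℝ (fderiv ℝ W))
    (hlow : ∀ x ξ, γ * ‖ξ‖ ^ 2 ≤ fderiv ℝ (fderiv ℝ W) x ξ ξ) (x y : E) :
    γ * ‖y - x‖ ^ 2 ≤ fderiv ℝ W y (y - x) - fderiv ℝ W x (y - x) := by
  set u := y - x
  let g : ℝ → ℝ := fun t => fderiv ℝ W (x + t • u) u
  have hg (t : ℝ) : HasDerivAt g (fderiv ℝ (fderiv ℝ W) (x + t • u) u u) t := by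
    have hline : HasDerivAt (fun s : ℝ => x + s • u) u t := by
      simpa using ((hasDerivAt_id t).smul_const u).const_add x
    exact (ContinuousLinearMap.apply ℝ ℝ u).hasFDerivAt.comp_hasDerivAt t
      ((hW _).hasFDerivAt.comp_hasDerivAt t hline)
  have h := mul_sub_le_image_sub_of_le_deriv (fun t => (hg t).differentiableAt)
    (fun t => (hg t).deriv ▸ hlow _ u) zero_le_one
  simpa [g, u] using h

theorem sq_fderiv_fderiv_apply_le (hW : ContDiff ℝ 2 W) {a : E}
    (hpos : ∀ ξ, 0 ≤ fderiv ℝ (fderiv ℝ W) a ξ ξ) (v w : E) :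
    fderiv ℝ (fderiv ℝ W) a v w ^ 2 ≤
      fderiv ℝ (fderiv ℝ W) a v v * fderiv ℝ (fderiv ℝ W) a w w :=
  LinearMap.BilinForm.apply_sq_le_of_symm (fderiv ℝ (fderiv ℝ W) a).toLinearMap₁₂ hpos
    ⟨fun v w => (hW.contDiffAt.isSymmSndFDerivAt (by simp)).eq v w⟩ v w

end

/-- Lower bound for the Newton direction in the energy norm `‖v‖_A = √(D²W(a)[v,v])`:
`‖δ‖_A ≥ (γ/√L)‖a - a*‖` where `a*` is the stationary point. -/
theorem stmt_8 {E : Type*} [NormedAddCommGroup E] [InnerProductSpace ℝ E]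
    [FiniteDimensional ℝ E]
    (W : E → ℝ) (γ L : ℝ) (hγ : 0 < γ) (hγL : γ ≤ L)
    (hW : ContDiff ℝ 2 W)
    (hlow : ∀ x ξ : E, γ * ‖ξ‖ ^ 2 ≤ iteratedFDeriv ℝ 2 W x ![ξ, ξ])
    (hup : ∀ x ξ : E, iteratedFDeriv ℝ 2 W x ![ξ, ξ] ≤ L * ‖ξ‖ ^ 2)
    (astar : E) (hstar : gradient W astar = 0)
    (a δ : E)
    (hδ : ∀ v : E, iteratedFDeriv ℝ 2 W a ![δ, v] = -⟪gradient W a, v⟫) :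
    γ / Real.sqrt L * ‖a - astar‖ ≤ Real.sqrt (iteratedFDeriv ℝ 2 W a ![δ, δ]) := by
  simp only [iteratedFDeriv_two_apply_pair, inner_gradient_left] at hlow hup hδ ⊢
  set H := fderiv ℝ (fderiv ℝ W) a
  set u := a - astar
  have hcrit : fderiv ℝ W astar = 0 := by simpa [gradient] using hstar
  have hmono : γ * ‖u‖ ^ 2 ≤ -H δ u := by
    have h := mul_norm_sq_le_fderiv_sub_fderiv
      ((hW.fderiv_right (m := 1) le_rfl).differentiable one_ne_zero) hlow astar a
    rw [hδ u, neg_neg]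
    simpa only [hcrit, zero_apply, sub_zero] using h
  have hpos (ξ : E) : 0 ≤ H ξ ξ := (by positivity : 0 ≤ γ * ‖ξ‖ ^ 2).trans (hlow a ξ)
  have hCS : H δ u ^ 2 ≤ H δ δ * (L * ‖u‖ ^ 2) :=
    (sq_fderiv_fderiv_apply_le hW hpos δ u).trans (mul_le_mul_of_nonneg_left (hup a u) (hpos δ))
  have hL : 0 < L := hγ.trans_le hγL
  have hsq : (γ * ‖u‖ ^ 2) ^ 2 ≤ L * H δ δ * ‖u‖ ^ 2 :=
    calc (γ * ‖u‖ ^ 2) ^ 2 ≤ H δ u ^ 2 := by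
          simpa only [neg_sq] using pow_le_pow_left₀ (by positivity) hmono 2
      _ ≤ H δ δ * (L * ‖u‖ ^ 2) := hCS
      _ = L * H δ δ * ‖u‖ ^ 2 := by ring
  have hcancel : γ ^ 2 * ‖u‖ ^ 2 ≤ L * H δ δ := by
    rcases (norm_nonneg u).eq_or_lt' with hu | hu
    · simpa [hu] using mul_nonneg hL.le (hpos δ)
    · exact le_of_mul_le_mul_right (by linarith) (pow_pos hu 2)
  apply Real.le_sqrt_of_sq_le
  rw [mul_pow, div_pow, Real.sq_sqrt hL.le, div_mul_eq_mul_div,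
    div_le_iff₀ hL]
  linarith
end

section
/- Let E be a finite-dimensional real inner product space and W : E → ℝ twice continuously differentiable with constants 0 < γ ≤ L such that γ‖ξ‖² ≤ D²W(x)[ξ, ξ] ≤ L‖ξ‖² for all x, ξ ∈ E. Let a* ∈ E be the unique global minimizer of W. For a ∈ E let δ be the Newton direction at a. Then D²W(a)[δ, δ] ≥ (2γ²/L²)(W(a) − W(a*)). -/
/-!
The lower bound `γ` on `D²W` gives, along every line, `W(a + v) ≥ W a + ⟪∇W a, v⟫ + γ‖v‖²/2`;
minimising the right-hand side over `v` yields the Polyak–Łojasiewicz inequality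
`2γ (W a - W x) ≤ ‖∇W a‖²` for every `x`. On the other side, the Newton equation gives
`D²W(a)[δ, ∇W a] = -‖∇W a‖²`, so Cauchy–Schwarz for the positive form `D²W(a)` together with
the upper bound `L` gives `‖∇W a‖⁴ ≤ D²W(a)[δ, δ] · L‖∇W a‖²`. Hence
`2γ (W a - W a*) ≤ L · D²W(a)[δ, δ]`, and `γ ≤ L` finishes.
-/

open scoped RealInnerProductSpace

section LineRestriction

variable {E F : Type*} [NormedAddCommGroup E] [NormedSpace ℝ E]
  [NormedAddCommGroup F] [NormedSpace ℝ F]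

theorem hasDerivAt_comp_add_smul {g : E → F} {x v : E} {t : ℝ}
    (hg : DifferentiableAt ℝ g (x + t • v)) :
    HasDerivAt (fun s : ℝ => g (x + s • v)) (fderiv ℝ g (x + t • v) v) t :=
  hg.hasFDerivAt.comp_hasDerivAt t
    ((((hasDerivAt_id t).smul_const v).const_add x).congr_deriv (one_smul ℝ v))

theorem add_fderiv_add_sq_le_of_fderiv_fderiv_ge {f : E → ℝ} {γ : ℝ} (hf : ContDiff ℝ 2 f)
    (hlow : ∀ x ξ, γ * ‖ξ‖ ^ 2 ≤ fderiv ℝ (fderiv ℝ f) x ξ ξ) (x v : E) :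
    f x + fderiv ℝ f x v + γ / 2 * ‖v‖ ^ 2 ≤ f (x + v) := by
  have hf₁ : Differentiable ℝ f := hf.differentiable (by norm_num)
  have hf₂ : Differentiable ℝ (fderiv ℝ f) :=
    (hf.fderiv_right (m := 1) (by norm_num)).differentiable one_ne_zero
  -- On the line `t ↦ x + t • v`, removing `γ/2 ‖v‖² t²` from `f` leaves a convex function,
  -- which lies above its tangent at `0`.
  set ψ : ℝ → ℝ := fun t => f (x + t • v) - γ / 2 * ‖v‖ ^ 2 * t ^ 2
  set χ : ℝ → ℝ := fun t => fderiv ℝ f (x + t • v) v - γ * ‖v‖ ^ 2 * t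
  have hψ : ∀ t, HasDerivAt ψ (χ t) t := fun t => by
    have h : HasDerivAt (fun s => f (x + s • v)) (fderiv ℝ f (x + t • v) v) t :=
      hasDerivAt_comp_add_smul (hf₁ _)
    exact (h.sub ((hasDerivAt_pow 2 t).const_mul (γ / 2 * ‖v‖ ^ 2))).congr_deriv
      (by simp only [χ]; ring)
  have hχ : ∀ t, HasDerivAt χ (fderiv ℝ (fderiv ℝ f) (x + t • v) v v - γ * ‖v‖ ^ 2) t :=
    fun t => by
      have h : HasDerivAt (fun s => fderiv ℝ f (x + s • v))
          (fderiv ℝ (fderiv ℝ f) (x + t • v) v) t :=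
        hasDerivAt_comp_add_smul (hf₂ _)
      exact ((h.clm_apply (hasDerivAt_const t v)).sub
        ((hasDerivAt_id t).const_mul (γ * ‖v‖ ^ 2))).congr_deriv (by simp)
  have hχ_mono : Monotone χ :=
    monotone_of_deriv_nonneg (fun t => (hχ t).differentiableAt)
      fun t => (hχ t).deriv ▸ sub_nonneg.2 (hlow _ v)
  have hψ_convex : ConvexOn ℝ Set.univ ψ :=
    Monotone.convexOn_univ_of_deriv (fun t => (hψ t).differentiableAt)
      (funext (fun t => (hψ t).deriv) ▸ hχ_mono)
  have htangent : χ 0 ≤ ψ 1 - ψ 0 := by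
    simpa [slope_def_field] using
      hψ_convex.le_slope_of_hasDerivAt trivial trivial zero_lt_one (hψ 0)
  simp only [χ, ψ, zero_smul, one_smul, add_zero, mul_zero, sub_zero, one_pow, mul_one,
    ne_eq, OfNat.ofNat_ne_zero, not_false_eq_true, zero_pow] at htangent
  linarith

end LineRestriction

section Gradient

variable {E : Type*} [NormedAddCommGroup E] [InnerProductSpace ℝ E]

theorem two_mul_sub_le_norm_gradient_sq [CompleteSpace E] {f : E → ℝ} {γ : ℝ} (hγ : 0 < γ)
    (hf : ContDiff ℝ 2 f) (hlow : ∀ x ξ, γ * ‖ξ‖ ^ 2 ≤ fderiv ℝ (fderiv ℝ f) x ξ ξ)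
    (x y : E) :
    2 * γ * (f x - f y) ≤ ‖gradient f x‖ ^ 2 := by
  have htaylor := add_fderiv_add_sq_le_of_fderiv_fderiv_ge hf hlow x (y - x)
  rw [add_sub_cancel, ← inner_gradient_left] at htaylor
  have hcs := neg_le_of_abs_le (abs_real_inner_le_norm (gradient f x) (y - x))
  nlinarith [sq_nonneg (γ * ‖y - x‖ - ‖gradient f x‖)]

theorem norm_sq_le_mul_apply_of_apply_eq_neg_inner {B : E →L[ℝ] E →L[ℝ] ℝ} {L : ℝ}
    (hsymm : ∀ v w, B v w = B w v) (hpos : ∀ ξ, 0 ≤ B ξ ξ) (hup : ∀ ξ, B ξ ξ ≤ L * ‖ξ‖ ^ 2)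
    {g δ : E} (hδ : ∀ v, B δ v = -⟪g, v⟫) :
    ‖g‖ ^ 2 ≤ L * B δ δ := by
  have hcs : B δ g ^ 2 ≤ B δ δ * B g g :=
    LinearMap.BilinForm.apply_sq_le_of_symm B.toLinearMap₁₂ hpos ⟨hsymm⟩ δ g
  rw [hδ, real_inner_self_eq_norm_sq] at hcs
  rcases (sq_nonneg ‖g‖).eq_or_lt with hg | hg
  · obtain rfl : g = 0 := by simpa using hg.symm
    simp [hδ]
  · nlinarith [mul_le_mul_of_nonneg_left (hup g) (hpos δ)]

end Gradient

theorem stmt_9_general {E : Type*} [NormedAddCommGroup E] [InnerProductSpace ℝ E]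
    [FiniteDimensional ℝ E]
    (W : E → ℝ) (γ L : ℝ) (hγ : 0 < γ) (hγL : γ ≤ L)
    (hW : ContDiff ℝ 2 W)
    (hlow : ∀ x ξ : E, γ * ‖ξ‖ ^ 2 ≤ iteratedFDeriv ℝ 2 W x ![ξ, ξ])
    (hup : ∀ x ξ : E, iteratedFDeriv ℝ 2 W x ![ξ, ξ] ≤ L * ‖ξ‖ ^ 2)
    (astar : E)
    (a δ : E)
    (hδ : ∀ v : E, iteratedFDeriv ℝ 2 W a ![δ, v] = -⟪gradient W a, v⟫) :
    2 * γ ^ 2 / L ^ 2 * (W a - W astar) ≤ iteratedFDeriv ℝ 2 W a ![δ, δ] := by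
  simp only [iteratedFDeriv_two_apply, Matrix.cons_val_zero, Matrix.cons_val_one,
    Matrix.cons_val_fin_one] at hlow hup hδ ⊢
  have hL : 0 < L := hγ.trans_le hγL
  have hpos : ∀ ξ, 0 ≤ fderiv ℝ (fderiv ℝ W) a ξ ξ := fun ξ =>
    (mul_nonneg hγ.le (sq_nonneg ‖ξ‖)).trans (hlow a ξ)
  have hPL := two_mul_sub_le_norm_gradient_sq hγ hW hlow a astar
  have hNewton := norm_sq_le_mul_apply_of_apply_eq_neg_inner
    (hW.contDiffAt.isSymmSndFDerivAt (by simp)) hpos (hup a) hδ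
  calc 2 * γ ^ 2 / L ^ 2 * (W a - W astar) = γ / L ^ 2 * (2 * γ * (W a - W astar)) := by ring
    _ ≤ γ / L ^ 2 * (L * fderiv ℝ (fderiv ℝ W) a δ δ) :=
      mul_le_mul_of_nonneg_left (hPL.trans hNewton) (by positivity)
    _ = γ / L * fderiv ℝ (fderiv ℝ W) a δ δ := by field_simp
    _ ≤ fderiv ℝ (fderiv ℝ W) a δ δ :=
      mul_le_of_le_one_left (hpos δ) ((div_le_one hL).2 hγL)

/-- Lower bound for the squared energy norm of the Newton direction in terms of the
energy distance to the minimum: `D²W(a)[δ,δ] ≥ (2γ²/L²)(W(a) - W(a*))`. -/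
theorem stmt_9 {E : Type*} [NormedAddCommGroup E] [InnerProductSpace ℝ E]
    [FiniteDimensional ℝ E]
    (W : E → ℝ) (γ L : ℝ) (hγ : 0 < γ) (hγL : γ ≤ L)
    (hW : ContDiff ℝ 2 W)
    (hlow : ∀ x ξ : E, γ * ‖ξ‖ ^ 2 ≤ iteratedFDeriv ℝ 2 W x ![ξ, ξ])
    (hup : ∀ x ξ : E, iteratedFDeriv ℝ 2 W x ![ξ, ξ] ≤ L * ‖ξ‖ ^ 2)
    (astar : E) (hmin : ∀ x : E, W astar ≤ W x)
    (a δ : E)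
    (hδ : ∀ v : E, iteratedFDeriv ℝ 2 W a ![δ, v] = -⟪gradient W a, v⟫) :
    2 * γ ^ 2 / L ^ 2 * (W a - W astar) ≤ iteratedFDeriv ℝ 2 W a ![δ, δ] :=
  stmt_9_general W γ L hγ hγL hW hlow hup astar a δ hδ
end

section
/- Let E be a finite-dimensional real inner product space and W : E → ℝ twice continuously differentiable with constants 0 < γ ≤ L such that γ‖ξ‖² ≤ D²W(x)[ξ, ξ] ≤ L‖ξ‖² for all x, ξ ∈ E, and assume additionally that the Hessian is Lipschitz continuous with constant L'' > 0, i.e. |D²W(x)[ξ, ξ] − D²W(y)[ξ, ξ]| ≤ L'' ‖x − y‖ ‖ξ‖² for all x, y, ξ ∈ E. Let σ ∈ (0, 1/2), let a ∈ E, and let δ be the Newton direction at a. If ‖δ‖ ≤ (1 − 2σ)γ/L'', then the full Newton step satisfies the Armijo condition with τ = 1: W(a + δ) ≤ W(a) + σ⟨∇W(a), δ⟩; consequently the backtracking line search returns the step size τ = 1. -/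
/-!
Restrict `W` to the segment `t ↦ a + t • δ`, so `φ(t) = W (a + t • δ)` has
`φ'(0) = ⟪∇W a, δ⟫ = -D²W(a)[δ, δ]` by the Newton equation, and the Lipschitz Hessian gives
`φ''(t) ≤ φ''(0) + L'' ‖δ‖³ t`. Integrating twice,
`φ(1) ≤ φ(0) - φ''(0) / 2 + L'' ‖δ‖³ / 6`, and the smallness of `δ` together with
`γ ‖δ‖² ≤ φ''(0)` bounds the cubic term by `(1/2 - σ) φ''(0)`.
-/

open Set
open scoped RealInnerProductSpace

theorem sub_le_sub_of_hasDerivAt_le {f g f' g' : ℝ → ℝ} {a b : ℝ} (hab : a ≤ b)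
    (hf : ∀ t ∈ Icc a b, HasDerivAt f (f' t) t) (hg : ∀ t ∈ Icc a b, HasDerivAt g (g' t) t)
    (hle : ∀ t ∈ Ioo a b, f' t ≤ g' t) : f b - f a ≤ g b - g a := by
  have hd : ∀ t ∈ Icc a b, HasDerivAt (fun s => g s - f s) (g' t - f' t) t :=
    fun t ht => (hg t ht).sub (hf t ht)
  have hmono : MonotoneOn (fun s => g s - f s) (Icc a b) := by
    apply monotoneOn_of_deriv_nonneg (convex_Icc a b)
    · exact fun t ht => (hd t ht).continuousAt.continuousWithinAt
    · rw [interior_Icc]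
      exact fun t ht => (hd t (Ioo_subset_Icc_self ht)).differentiableAt.differentiableWithinAt
    · rw [interior_Icc]
      intro t ht
      rw [(hd t (Ioo_subset_Icc_self ht)).deriv]
      exact sub_nonneg.2 (hle t ht)
  have := hmono (left_mem_Icc.2 hab) (right_mem_Icc.2 hab) hab
  linarith

theorem le_taylor_of_second_deriv_le {φ φ' φ'' : ℝ → ℝ} {K : ℝ}
    (hφ : ∀ t ∈ Icc (0 : ℝ) 1, HasDerivAt φ (φ' t) t)
    (hφ' : ∀ t ∈ Icc (0 : ℝ) 1, HasDerivAt φ' (φ'' t) t)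
    (hK : ∀ t ∈ Icc (0 : ℝ) 1, φ'' t ≤ φ'' 0 + K * t) :
    φ 1 ≤ φ 0 + φ' 0 + φ'' 0 / 2 + K / 6 := by
  have hquad : ∀ t, HasDerivAt (fun s => φ'' 0 * s + K * s ^ 2 / 2) (φ'' 0 + K * t) t := by
    intro t
    refine (((hasDerivAt_id t).const_mul (φ'' 0)).add
      (((hasDerivAt_pow 2 t).const_mul K).div_const 2)).congr_deriv ?_
    simp only [Nat.cast_ofNat]
    ring
  have hcubic : ∀ t, HasDerivAt (fun s => φ' 0 * s + φ'' 0 * s ^ 2 / 2 + K * s ^ 3 / 6)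
      (φ' 0 + (φ'' 0 * t + K * t ^ 2 / 2)) t := by
    intro t
    refine ((((hasDerivAt_id t).const_mul (φ' 0)).add
      (((hasDerivAt_pow 2 t).const_mul (φ'' 0)).div_const 2)).add
      (((hasDerivAt_pow 3 t).const_mul K).div_const 6)).congr_deriv ?_
    simp only [Nat.cast_ofNat]
    ring
  have hφ'_le : ∀ t ∈ Icc (0 : ℝ) 1, φ' t ≤ φ' 0 + (φ'' 0 * t + K * t ^ 2 / 2) := by
    intro t ht
    have := sub_le_sub_of_hasDerivAt_le ht.1
      (fun s hs => hφ' s ⟨hs.1, hs.2.trans ht.2⟩) (fun s _ => hquad s)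
      (fun s hs => hK s ⟨hs.1.le, hs.2.le.trans ht.2⟩)
    simp only [mul_zero, zero_pow two_ne_zero, zero_div, add_zero, sub_zero] at this
    linarith
  have := sub_le_sub_of_hasDerivAt_le zero_le_one hφ (fun s _ => hcubic s)
    (fun s hs => hφ'_le s (Ioo_subset_Icc_self hs))
  norm_num at this
  linarith

section Segment

variable {E F : Type*} [NormedAddCommGroup E] [NormedSpace ℝ E] [NormedAddCommGroup F]
  [NormedSpace ℝ F]

theorem hasDerivAt_comp_segment {f : E → F} {x v : E} {t : ℝ}
    (hf : DifferentiableAt ℝ f (x + t • v)) :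
    HasDerivAt (fun s : ℝ => f (x + s • v)) (fderiv ℝ f (x + t • v) v) t := by
  have hline : HasDerivAt (fun s : ℝ => x + s • v) v t := by
    simpa using ((hasDerivAt_id t).smul_const v).const_add x
  exact hf.hasFDerivAt.comp_hasDerivAt t hline

theorem hasDerivAt_fderiv_comp_segment {W : E → ℝ} (hW : ContDiff ℝ 2 W) (x v : E) (t : ℝ) :
    HasDerivAt (fun s : ℝ => fderiv ℝ W (x + s • v) v)
      (iteratedFDeriv ℝ 2 W (x + t • v) ![v, v]) t := by
  have hW' : Differentiable ℝ (fderiv ℝ W) :=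
    (hW.fderiv_right (m := 1) (by norm_num)).differentiable (by norm_num)
  rw [iteratedFDeriv_two_apply]
  exact (ContinuousLinearMap.apply ℝ ℝ v).hasFDerivAt.comp_hasDerivAt t
    (hasDerivAt_comp_segment (hW' _))

end Segment

theorem isGreatest_one_of_pow {ρ : ℝ} (hρ0 : 0 ≤ ρ) (hρ1 : ρ ≤ 1) {P : ℝ → Prop} (hP : P 1) :
    IsGreatest {t : ℝ | ∃ k : ℕ, t = ρ ^ k ∧ P t} 1 :=
  ⟨⟨0, (pow_zero ρ).symm, hP⟩, by rintro t ⟨k, rfl, -⟩; exact pow_le_one₀ hρ0 hρ1⟩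

theorem armijo_newton_step {E : Type*} [NormedAddCommGroup E] [InnerProductSpace ℝ E]
    [CompleteSpace E] {W : E → ℝ} {γ L'' σ : ℝ} {a δ : E} (hW : ContDiff ℝ 2 W)
    (hlow : γ * ‖δ‖ ^ 2 ≤ iteratedFDeriv ℝ 2 W a ![δ, δ]) (hL'' : 0 < L'')
    (hhess : ∀ x : E, |iteratedFDeriv ℝ 2 W x ![δ, δ] - iteratedFDeriv ℝ 2 W a ![δ, δ]| ≤
      L'' * ‖x - a‖ * ‖δ‖ ^ 2)
    (hσ : σ < 1 / 2) (hnewton : iteratedFDeriv ℝ 2 W a ![δ, δ] = -⟪gradient W a, δ⟫)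
    (hsmall : ‖δ‖ ≤ (1 - 2 * σ) * γ / L'') :
    W (a + δ) ≤ W a + σ * ⟪gradient W a, δ⟫ := by
  have hlip : ∀ t ∈ Icc (0 : ℝ) 1, iteratedFDeriv ℝ 2 W (a + t • δ) ![δ, δ] ≤
      iteratedFDeriv ℝ 2 W (a + (0 : ℝ) • δ) ![δ, δ] + L'' * ‖δ‖ ^ 3 * t := by
    intro t ht
    have h := (abs_le.1 (hhess (a + t • δ))).2
    rw [add_sub_cancel_left, norm_smul, Real.norm_of_nonneg ht.1] at h
    rw [zero_smul, add_zero]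
    linarith
  have htaylor := le_taylor_of_second_deriv_le
    (fun t _ => hasDerivAt_comp_segment (hW.differentiable (by norm_num) _))
    (fun t _ => hasDerivAt_fderiv_comp_segment hW a δ t) hlip
  have hgrad : fderiv ℝ W a δ = ⟪gradient W a, δ⟫ := by
    rw [← toDual_gradient]; rfl
  simp only [one_smul, zero_smul, add_zero, hgrad] at htaylor
  have hcubic : L'' * ‖δ‖ ^ 3 ≤ (1 - 2 * σ) * iteratedFDeriv ℝ 2 W a ![δ, δ] := by
    have hδL : ‖δ‖ * L'' ≤ (1 - 2 * σ) * γ := (le_div_iff₀ hL'').1 hsmall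
    nlinarith [norm_nonneg δ, sq_nonneg ‖δ‖]
  nlinarith [pow_nonneg (norm_nonneg δ) 3]

theorem stmt_13_general {E : Type*} [NormedAddCommGroup E] [InnerProductSpace ℝ E]
    [FiniteDimensional ℝ E]
    (W : E → ℝ) (γ : ℝ)
    (hW : ContDiff ℝ 2 W)
    (hlow : ∀ x ξ : E, γ * ‖ξ‖ ^ 2 ≤ iteratedFDeriv ℝ 2 W x ![ξ, ξ])
    (L'' : ℝ) (hL'' : 0 < L'')
    (hhess : ∀ x y ξ : E,
      |iteratedFDeriv ℝ 2 W x ![ξ, ξ] - iteratedFDeriv ℝ 2 W y ![ξ, ξ]| ≤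
        L'' * ‖x - y‖ * ‖ξ‖ ^ 2)
    (σ : ℝ) (hσ1 : σ < 1 / 2)
    (a δ : E)
    (hδ : ∀ v : E, iteratedFDeriv ℝ 2 W a ![δ, v] = -⟪gradient W a, v⟫)
    (hsmall : ‖δ‖ ≤ (1 - 2 * σ) * γ / L'') :
    W (a + δ) ≤ W a + σ * ⟪gradient W a, δ⟫ ∧
    ∀ ρ : ℝ, 0 < ρ → ρ ≤ 1 / 2 →
      IsGreatest {t : ℝ | ∃ k : ℕ, t = ρ ^ k ∧
        W (a + t • δ) ≤ W a + σ * t * ⟪gradient W a, δ⟫} 1 := by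
  have harmijo := armijo_newton_step hW (hlow a δ) hL'' (fun x => hhess x a δ) hσ1 (hδ δ) hsmall
  refine ⟨harmijo, fun ρ hρ0 hρ1 => isGreatest_one_of_pow hρ0.le (by linarith) ?_⟩
  simpa using harmijo

/-- If the Hessian is Lipschitz continuous and the Newton direction is small enough,
then the full Newton step `τ = 1` satisfies the Armijo condition, and hence the
backtracking line search returns the step size `1`. -/
theorem stmt_13 {E : Type*} [NormedAddCommGroup E] [InnerProductSpace ℝ E]
    [FiniteDimensional ℝ E]
    (W : E → ℝ) (γ L : ℝ) (hγ : 0 < γ) (hγL : γ ≤ L)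
    (hW : ContDiff ℝ 2 W)
    (hlow : ∀ x ξ : E, γ * ‖ξ‖ ^ 2 ≤ iteratedFDeriv ℝ 2 W x ![ξ, ξ])
    (hup : ∀ x ξ : E, iteratedFDeriv ℝ 2 W x ![ξ, ξ] ≤ L * ‖ξ‖ ^ 2)
    (L'' : ℝ) (hL'' : 0 < L'')
    (hhess : ∀ x y ξ : E,
      |iteratedFDeriv ℝ 2 W x ![ξ, ξ] - iteratedFDeriv ℝ 2 W y ![ξ, ξ]| ≤
        L'' * ‖x - y‖ * ‖ξ‖ ^ 2)
    (σ : ℝ) (hσ0 : 0 < σ) (hσ1 : σ < 1 / 2)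
    (a δ : E)
    (hδ : ∀ v : E, iteratedFDeriv ℝ 2 W a ![δ, v] = -⟪gradient W a, v⟫)
    (hsmall : ‖δ‖ ≤ (1 - 2 * σ) * γ / L'') :
    W (a + δ) ≤ W a + σ * ⟪gradient W a, δ⟫ ∧
    ∀ ρ : ℝ, 0 < ρ → ρ ≤ 1 / 2 →
      IsGreatest {t : ℝ | ∃ k : ℕ, t = ρ ^ k ∧
        W (a + t • δ) ≤ W a + σ * t * ⟪gradient W a, δ⟫} 1 :=
  stmt_13_general W γ hW hlow L'' hL'' hhess σ hσ1 a δ hδ hsmall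
end
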